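/- arXiv:2103.02915 — 4 statements merged into one kernel-verified Lean document; each statement's English description precedes it below -/
import Mathlib

section
/- Fix real numbers B, m, h, r and ε₁, ε₂ with h > 0, r ≥ 1, ε₁ > 0, ε₂ > 0. Then there exists N such that for all real n ≥ N: the denominator n²rh + 2(r−1)B is positive, and, setting A_n := −n/2 + (n(r−2)B + 3(r−1)m)/(n²rh + 2(r−1)B) and K_n := −(3nm + 2n²B + 2B²/h)/(n²rh + 2(r−1)B), both inequalities (1/2)(ε₁ − n)² < A_n·(ε₁ − n) + K_n and (1/2)ε₂² < A_n·(−ε₂) + K_n hold. In other words, for n sufficiently large the points (−n + ε₁, (1/2)(−n+ε₁)²) and (−ε₂, (1/2)ε₂²) of the parabola w = b²/2 lie strictly below the line w = A_n·b + K_n. -/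
open Filter

private lemma cubic_tendsto (a b c d : ℝ) (ha : 0 < a) :
    Tendsto (fun n : ℝ => a*n^3 + b*n^2 + c*n + d) atTop atTop := by
  have h1 : Tendsto (fun n : ℝ => n^2 * (a*n + (b - |c| - |d|))) atTop atTop := by
    apply Filter.Tendsto.atTop_mul_atTop₀ (tendsto_pow_atTop two_ne_zero)
    exact tendsto_atTop_add_const_right _ _ (tendsto_id.const_mul_atTop ha)
  apply tendsto_atTop_mono' _ _ h1
  filter_upwards [eventually_ge_atTop (1:ℝ)] with n hn
  have hn2 : 1 ≤ n^2 := by nlinarith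
  have h2 : -|c| * n^2 ≤ c * n := by
    have hin : 0 ≤ c + |c| * n := by nlinarith [neg_abs_le c, abs_nonneg c]
    nlinarith [mul_nonneg (le_trans zero_le_one hn) hin]
  have h3 : -|d| * n^2 ≤ d := by
    nlinarith [neg_abs_le d, mul_le_mul_of_nonneg_left hn2 (abs_nonneg d)]
  nlinarith

/-- For `n` sufficiently large, the denominator `n²rh + 2(r−1)B` is positive and the two
boundary points `(−n + ε₁, (1/2)(−n+ε₁)²)` and `(−ε₂, (1/2)ε₂²)` of the parabola `w = b²/2`
lie strictly below the line `ℓ_f : w = A_n·b + K_n` (estimate (10) of the paper). -/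
theorem stmt_3 (B m h r ε₁ ε₂ : ℝ) (hh : 0 < h) (hr : 1 ≤ r)
    (he₁ : 0 < ε₁) (he₂ : 0 < ε₂) :
    ∃ N : ℝ, ∀ n : ℝ, N ≤ n →
      0 < n^2*r*h + 2*(r-1)*B ∧
      (1/2)*(ε₁ - n)^2 <
        (-n/2 + (n*(r-2)*B + 3*(r-1)*m) / (n^2*r*h + 2*(r-1)*B)) * (ε₁ - n)
          + (-(3*n*m + 2*n^2*B + 2*B^2/h) / (n^2*r*h + 2*(r-1)*B)) ∧
      (1/2)*ε₂^2 <
        (-n/2 + (n*(r-2)*B + 3*(r-1)*m) / (n^2*r*h + 2*(r-1)*B)) * (-ε₂)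
          + (-(3*n*m + 2*n^2*B + 2*B^2/h) / (n^2*r*h + 2*(r-1)*B)) := by
  have hr0 : 0 < r := lt_of_lt_of_le one_pos hr
  have hrh : 0 < r * h := mul_pos hr0 hh
  have hD : Tendsto (fun n : ℝ => n^2*r*h + 2*(r-1)*B) atTop atTop := by
    have h1 : Tendsto (fun n : ℝ => n^2 * (r*h)) atTop atTop :=
      Tendsto.atTop_mul_const hrh (tendsto_pow_atTop two_ne_zero)
    exact (tendsto_atTop_add_const_right _ (2*(r-1)*B) h1).congr (fun n => by ring)
  have hg1 : Tendsto (fun n : ℝ =>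
      (ε₁/2)*(n-ε₁)*(n^2*r*h + 2*(r-1)*B)
        + (n*(r-2)*B + 3*(r-1)*m)*(ε₁-n) - (3*n*m + 2*n^2*B + 2*B^2/h)) atTop atTop := by
    have := cubic_tendsto (ε₁*r*h/2)
      (-(ε₁^2*r*h/2) - (r-2)*B - 2*B)
      (ε₁*(r-1)*B + (r-2)*B*ε₁ - 3*(r-1)*m - 3*m)
      (-(ε₁^2*(r-1)*B) + 3*(r-1)*m*ε₁ - 2*B^2/h)
      (by positivity)
    exact this.congr (fun n => by ring)
  have hg2 : Tendsto (fun n : ℝ =>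
      (ε₂/2)*(n-ε₂)*(n^2*r*h + 2*(r-1)*B)
        - (n*(r-2)*B + 3*(r-1)*m)*ε₂ - (3*n*m + 2*n^2*B + 2*B^2/h)) atTop atTop := by
    have := cubic_tendsto (ε₂*r*h/2)
      (-(ε₂^2*r*h/2) - 2*B)
      (ε₂*(r-1)*B - (r-2)*B*ε₂ - 3*m)
      (-(ε₂^2*(r-1)*B) - 3*(r-1)*m*ε₂ - 2*B^2/h)
      (by positivity)
    exact this.congr (fun n => by ring)
  have hev := (hD.eventually_gt_atTop 0).and
    ((hg1.eventually_gt_atTop 0).and (hg2.eventually_gt_atTop 0))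
  rw [eventually_atTop] at hev
  obtain ⟨N, hN⟩ := hev
  refine ⟨N, fun n hn => ?_⟩
  obtain ⟨h1, h2, h3⟩ := hN n hn
  have hD0 : (n^2*r*h + 2*(r-1)*B) ≠ 0 := ne_of_gt h1
  refine ⟨h1, ?_, ?_⟩
  · have heq : (-n/2 + (n*(r-2)*B + 3*(r-1)*m) / (n^2*r*h + 2*(r-1)*B)) * (ε₁ - n)
          + (-(3*n*m + 2*n^2*B + 2*B^2/h) / (n^2*r*h + 2*(r-1)*B))
        - (1/2)*(ε₁ - n)^2
        = ((ε₁/2)*(n-ε₁)*(n^2*r*h + 2*(r-1)*B)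
            + (n*(r-2)*B + 3*(r-1)*m)*(ε₁-n) - (3*n*m + 2*n^2*B + 2*B^2/h))
          / (n^2*r*h + 2*(r-1)*B) := by
      generalize n^2*r*h + 2*(r-1)*B = D at hD0 ⊢
      field_simp
      ring
    rw [← sub_pos, heq]
    exact div_pos h2 h1
  · have heq : (-n/2 + (n*(r-2)*B + 3*(r-1)*m) / (n^2*r*h + 2*(r-1)*B)) * (-ε₂)
          + (-(3*n*m + 2*n^2*B + 2*B^2/h) / (n^2*r*h + 2*(r-1)*B))
        - (1/2)*ε₂^2
        = ((ε₂/2)*(n-ε₂)*(n^2*r*h + 2*(r-1)*B)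
            - (n*(r-2)*B + 3*(r-1)*m)*ε₂ - (3*n*m + 2*n^2*B + 2*B^2/h))
          / (n^2*r*h + 2*(r-1)*B) := by
      generalize n^2*r*h + 2*(r-1)*B = D at hD0 ⊢
      field_simp
      ring
    rw [← sub_pos, heq]
    exact div_pos h3 h1
end

section
/- Let p, q, b₀, w₀ be real numbers with q < p²/2, w₀ > b₀²/2 and b₀ < p, and set σ := (w₀ − q)/(b₀ − p) and g(x) := x² − p·x + q. Then: (i) for every real x, g(x) − (q + σ·(x − p)) = (x − p)(x − σ), so the line through (p,q) and (b₀,w₀) meets the graph of g exactly at x = p and x = σ; (ii) σ < p − √(p² − 2q); and (iii) g(σ) > σ²/2, i.e. the intersection point (σ, g(σ)) lies strictly above the parabola w = x²/2. -/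
/-- Geometric core of the `ch₀ ≠ 0` case of Proposition C.1: with `q < p²/2`,
`w₀ > b₀²/2`, `b₀ < p`, `σ := (w₀ − q)/(b₀ − p)` and `g(x) := x² − px + q`:
(i) `g(x) − (q + σ(x − p)) = (x − p)(x − σ)` for all `x`, so the line through `(p,q)` and
`(b₀,w₀)` meets the graph of `g` exactly at `x = p` and `x = σ`;
(ii) `σ < p − √(p² − 2q)`; (iii) `g(σ) > σ²/2`. -/
theorem stmt_8 (p q b₀ w₀ σ : ℝ) (hq : q < p^2/2) (hw : w₀ > b₀^2/2) (hb : b₀ < p)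
    (hσ : σ = (w₀ - q)/(b₀ - p)) :
    ((∀ x : ℝ, (x^2 - p*x + q) - (q + σ*(x - p)) = (x - p)*(x - σ)) ∧
      (∀ x : ℝ, x^2 - p*x + q = q + σ*(x - p) ↔ x = p ∨ x = σ)) ∧
    σ < p - Real.sqrt (p^2 - 2*q) ∧
    σ^2 - p*σ + q > σ^2/2 := by
  have hbp : b₀ - p < 0 := by linarith
  have hbp' : b₀ - p ≠ 0 := ne_of_lt hbp
  have hσ' : σ * (b₀ - p) = w₀ - q := by
    rw [hσ]; field_simp
  set s := Real.sqrt (p^2 - 2*q) with hs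
  have hs0 : 0 ≤ s := Real.sqrt_nonneg _
  have hs2 : s^2 = p^2 - 2*q := Real.sq_sqrt (by linarith)
  have h2 : σ < p - s := by
    nlinarith [sq_nonneg (b₀ - (p - s)), hσ', hw]
  refine ⟨⟨fun x => by ring, fun x => ?_⟩, h2, ?_⟩
  · constructor
    · intro h
      have : (x - p) * (x - σ) = 0 := by nlinarith [h]
      rcases mul_eq_zero.mp this with h' | h'
      · left; linarith
      · right; linarith
    · rintro (rfl | rfl) <;> ring
  · nlinarith [hs2, hs0, h2]
end

section
/- Let e, c₀, q be real numbers with c₀ > 0 and 2·c₀²·q < e², and set p := e/c₀. Then there exists a unique real number σ such that D := σ² − 2pσ + 2q > 0 and (2 + c₀)·√D + c₀·σ = e. Moreover, for this σ, setting a := σ − √D and b := σ + √D (which are precisely the two abscissae at which the line through (p,q) with slope σ meets the parabola w = x²/2), one has a < b < p and b − a = e − c₀·b > 0. -/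
set_option maxHeartbeats 1000000 in
/-- Existence and uniqueness of the line `ℓ_v` (equation (21) of the paper), normalised
by `H³`: with `c₀ > 0`, `2c₀²q < e²` and `p := e/c₀`, there is a unique slope `σ` with
`D := σ² − 2pσ + 2q > 0` and `(2 + c₀)√D + c₀σ = e`; and for this `σ`, the abscissae
`a := σ − √D < b := σ + √D` of the two intersections of the line through `(p,q)` of slope
`σ` with the parabola `w = x²/2` satisfy `a < b < p` and `b − a = e − c₀·b > 0`. -/
theorem stmt_9 (e c₀ q : ℝ) (hc : 0 < c₀) (hq : 2*c₀^2*q < e^2) :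
    (∃! σ : ℝ, σ^2 - 2*(e/c₀)*σ + 2*q > 0 ∧
        (2 + c₀) * Real.sqrt (σ^2 - 2*(e/c₀)*σ + 2*q) + c₀*σ = e) ∧
    (∀ σ : ℝ, σ^2 - 2*(e/c₀)*σ + 2*q > 0 →
        (2 + c₀) * Real.sqrt (σ^2 - 2*(e/c₀)*σ + 2*q) + c₀*σ = e →
      (∀ x : ℝ, x^2/2 = σ*(x - e/c₀) + q ↔
          x = σ - Real.sqrt (σ^2 - 2*(e/c₀)*σ + 2*q) ∨
          x = σ + Real.sqrt (σ^2 - 2*(e/c₀)*σ + 2*q)) ∧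
      σ - Real.sqrt (σ^2 - 2*(e/c₀)*σ + 2*q)
        < σ + Real.sqrt (σ^2 - 2*(e/c₀)*σ + 2*q) ∧
      σ + Real.sqrt (σ^2 - 2*(e/c₀)*σ + 2*q) < e/c₀ ∧
      (σ + Real.sqrt (σ^2 - 2*(e/c₀)*σ + 2*q))
          - (σ - Real.sqrt (σ^2 - 2*(e/c₀)*σ + 2*q))
        = e - c₀*(σ + Real.sqrt (σ^2 - 2*(e/c₀)*σ + 2*q)) ∧
      0 < e - c₀*(σ + Real.sqrt (σ^2 - 2*(e/c₀)*σ + 2*q))) := by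
  have hc0 : c₀ ≠ 0 := hc.ne'
  have he : e = c₀ * (e/c₀) := by field_simp
  have h1c : (0:ℝ) < 1 + c₀ := by linarith
  have hk : 0 < (e/c₀)^2 - 2*q := by
    have h2 : 2*q < (e/c₀)^2 := by
      rw [div_pow, lt_div_iff₀ (by positivity)]
      nlinarith [hq]
    linarith
  set u := Real.sqrt (((e/c₀)^2 - 2*q)/(1+c₀)) with hu_def
  have hu : 0 < u := Real.sqrt_pos.mpr (by positivity)
  have hu2 : u^2 = ((e/c₀)^2 - 2*q)/(1+c₀) := Real.sq_sqrt (by positivity)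
  have hu2' : u^2*(1+c₀) = (e/c₀)^2 - 2*q := by
    rw [hu2]; field_simp
  set σ₀ := e/c₀ - (2+c₀)/2*u with hσ₀
  have hD₀ : σ₀^2 - 2*(e/c₀)*σ₀ + 2*q = (c₀*u/2)^2 := by
    rw [hσ₀]; linear_combination hu2'
  have hDpos₀ : σ₀^2 - 2*(e/c₀)*σ₀ + 2*q > 0 := by
    rw [hD₀]; positivity
  have hsqrt₀ : Real.sqrt (σ₀^2 - 2*(e/c₀)*σ₀ + 2*q) = c₀*u/2 := by
    rw [hD₀, Real.sqrt_sq (by positivity)]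
  have heq₀ : (2 + c₀) * Real.sqrt (σ₀^2 - 2*(e/c₀)*σ₀ + 2*q) + c₀*σ₀ = e := by
    rw [hsqrt₀, hσ₀]; linear_combination -he
  constructor
  · refine ⟨σ₀, ⟨hDpos₀, heq₀⟩, ?_⟩
    rintro σ ⟨hD, heq⟩
    set s := Real.sqrt (σ^2 - 2*(e/c₀)*σ + 2*q) with hs_def
    have hs : 0 < s := Real.sqrt_pos.mpr hD
    have hs2 : s^2 = σ^2 - 2*(e/c₀)*σ + 2*q := Real.sq_sqrt hD.le
    have hcs : (2+c₀)*s = c₀*((e/c₀) - σ) := by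
      rw [mul_sub]; rw [← he]; linarith [heq]
    have hps : 0 < (e/c₀) - σ := by nlinarith [hcs, hs, hc]
    have h1 : ((2+c₀)*s)^2 = (c₀*((e/c₀) - σ))^2 := by rw [hcs]
    have h3 : (4+4*c₀) * ((((e/c₀)-σ) - (2+c₀)/2*u) * (((e/c₀)-σ) + (2+c₀)/2*u)) = 0 := by
      linear_combination h1 - (2+c₀)^2 * hs2 - (2+c₀)^2 * hu2'
    have h4 : (((e/c₀)-σ) - (2+c₀)/2*u) * (((e/c₀)-σ) + (2+c₀)/2*u) = 0 := by
      have : (4+4*c₀) ≠ 0 := by positivity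
      exact (mul_eq_zero.mp h3).resolve_left this
    have h5 : ((e/c₀)-σ) - (2+c₀)/2*u = 0 := by
      rcases mul_eq_zero.mp h4 with h | h
      · exact h
      · exfalso; nlinarith [hps, hu, hc]
    rw [hσ₀]; linarith [h5]
  · intro σ hD heq
    set s := Real.sqrt (σ^2 - 2*(e/c₀)*σ + 2*q) with hs_def
    have hs : 0 < s := Real.sqrt_pos.mpr hD
    have hs2 : s^2 = σ^2 - 2*(e/c₀)*σ + 2*q := Real.sq_sqrt hD.le
    have hcs : (2+c₀)*s = c₀*((e/c₀) - σ) := by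
      rw [mul_sub]; rw [← he]; linarith [heq]
    have h2s : e - c₀*(σ + s) = 2*s := by rw [← heq]; ring
    refine ⟨?_, by linarith, ?_, by rw [h2s]; ring, by rw [h2s]; linarith⟩
    · intro x
      constructor
      · intro h
        have hfac : (x - (σ - s)) * (x - (σ + s)) = 0 := by
          linear_combination 2*h - hs2
        rcases mul_eq_zero.mp hfac with h' | h'
        · left; linarith [sub_eq_zero.mp h']
        · right; linarith [sub_eq_zero.mp h']
      · rintro (rfl | rfl)
        · linear_combination hs2/2
        · linear_combination hs2/2
    · have hps : c₀*((e/c₀) - σ - s) = 2*s := by linear_combination -hcs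
      nlinarith [hps, hs, hc]
end

section
/- For all real numbers B, M and h > 0 there exists N such that for all real n ≥ N and all real c with h ≤ c ≤ n − h, the quartic f_n(c) := −(1/4)c⁴ + n·c³ + (−(5/4)n² − B/2 + B²/(4n²))·c² + ((1/2)n³ + 3nB + 3B²/(2n) + M)·c − ((5/2)B·n² + M·n + (7/4)B²) is strictly positive. -/
set_option maxHeartbeats 1600000 in
/-- Key analytic claim in the proof of the rank-2 theorem (Theorem B.2): for any real
`B, M` and `h > 0` there is `N` such that for all `n ≥ N` the quartic `f_n` is strictly
positive on the whole interval `[h, n − h]`. -/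
theorem stmt_11 (B M h : ℝ) (hh : 0 < h) :
    ∃ N : ℝ, ∀ n : ℝ, N ≤ n → ∀ c : ℝ, h ≤ c → c ≤ n - h →
      0 < -(1/4)*c^4 + n*c^3 + (-(5/4)*n^2 - B/2 + B^2/(4*n^2))*c^2
          + ((1/2)*n^3 + 3*n*B + 3*B^2/(2*n) + M)*c
          - ((5/2)*B*n^2 + M*n + (7/4)*B^2) := by
  obtain ⟨K, hKdef⟩ : ∃ K : ℝ, K = 4*|B| + 2*B^2 + |M| := ⟨_, rfl⟩
  have hK0 : 0 ≤ K := by rw [hKdef]; positivity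
  refine ⟨max (max 1 (2*h)) (8*K/h + 1), fun n hn c hc1 hc2 => ?_⟩
  have hn1 : (1:ℝ) ≤ n := le_trans (le_trans (le_max_left _ _) (le_max_left _ _)) hn
  have hn2h : 2*h ≤ n := le_trans (le_trans (le_max_right _ _) (le_max_left _ _)) hn
  have hnK' : 8*K/h + 1 ≤ n := le_trans (le_max_right _ _) hn
  have hnK : 8*K < h*n := by
    have h1 : 8*K/h < n := by linarith
    calc 8*K = (8*K/h)*h := by field_simp
    _ < n*h := mul_lt_mul_of_pos_right h1 hh
    _ = h*n := mul_comm _ _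
  have hn0 : (0:ℝ) < n := by linarith
  have hne : n ≠ 0 := ne_of_gt hn0
  have hcn : c ≤ n := by linarith
  have key : -(1/4)*c^4 + n*c^3 + (-(5/4)*n^2 - B/2 + B^2/(4*n^2))*c^2
          + ((1/2)*n^3 + 3*n*B + 3*B^2/(2*n) + M)*c
          - ((5/2)*B*n^2 + M*n + (7/4)*B^2)
      = (n-c)*((n-c)*((1/4)*c*(2*n-c))
          - ((-B/2 + B^2/(4*n^2))*(c+n) + (3*n*B + 3*B^2/(2*n) + M))) := by
    field_simp
    ring
  rw [key]
  have e1 : B^2/(4*n^2) ≤ B^2/4 := by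
    rw [div_le_div_iff₀ (by positivity) (by norm_num)]
    nlinarith [mul_nonneg (sq_nonneg B) (show (0:ℝ) ≤ n^2 - 1 by nlinarith)]
  have e2 : 3*B^2/(2*n) ≤ 3*B^2/2 := by
    rw [div_le_div_iff₀ (by positivity) (by norm_num)]
    nlinarith [sq_nonneg B]
  have hA : -B/2 + B^2/(4*n^2) ≤ |B|/2 + B^2/4 := by
    have := neg_abs_le B
    linarith
  have hAc : (-B/2 + B^2/(4*n^2))*(c+n) ≤ (|B|/2 + B^2/4)*(2*n) :=
    mul_le_mul hA (by linarith) (by linarith) (by positivity)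
  have hD : 3*n*B + 3*B^2/(2*n) + M ≤ 3*n*|B| + 3*B^2/2 + |M| := by
    have h1 : B ≤ |B| := le_abs_self B
    have h2 : M ≤ |M| := le_abs_self M
    have h3 : 3*n*B ≤ 3*n*|B| := by
      have := mul_le_mul_of_nonneg_left h1 (by linarith : (0:ℝ) ≤ 3*n)
      linarith
    linarith [e2]
  have hl : (-B/2 + B^2/(4*n^2))*(c+n) + (3*n*B + 3*B^2/(2*n) + M) ≤ K*n := by
    have hB2 : (0:ℝ) ≤ B^2 * (n-1) := mul_nonneg (sq_nonneg B) (by linarith)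
    have hM2 : (0:ℝ) ≤ |M| * (n-1) := mul_nonneg (abs_nonneg M) (by linarith)
    have hexp : (|B|/2 + B^2/4)*(2*n) = |B| * n + B^2*n/2 := by ring
    have hKn : K*n = 4*(|B| * n) + 2*B^2*n + |M| * n := by rw [hKdef]; ring
    linarith [hAc, hD]
  have q1 : h*(n-h) ≤ c*(n-c) := by nlinarith
  have q2 : (1/8)*h*n^2 ≤ (n-c)*((1/4)*c*(2*n-c)) := by
    have h3 : h*(n-h)*(2*n-c) ≤ c*(n-c)*(2*n-c) :=
      mul_le_mul_of_nonneg_right q1 (by linarith)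
    nlinarith [mul_nonneg (mul_nonneg hh.le (by linarith : (0:ℝ) ≤ n-h)) (by linarith : (0:ℝ) ≤ n - c),
      mul_nonneg hh.le (by linarith : (0:ℝ) ≤ n - 2*h)]
  apply mul_pos (by linarith : (0:ℝ) < n - c)
  nlinarith [q2, hl, mul_pos hn0 (show (0:ℝ) < (1/8)*(h*n) - K by linarith)]
end
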